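/- arXiv:2207.01232 — 2 statements merged into one kernel-verified Lean document; each statement's English description precedes it below -/
import Mathlib

section
/- In a triangulated category, consider a distinguished triangle A₀ --f₀--> A₁ --(f₁, g₁)ᵀ--> A₂ ⊕ B₂ --(f₂, g₂)--> ΣA₀, where the last map has components f₂ : A₂ → ΣA₀ and g₂ : B₂ → ΣA₀. If g₂ = 0, then this triangle is isomorphic to the direct sum of a distinguished triangle A₀ --f₀--> A₁' --k--> A₂ --f₂--> ΣA₀ and the contractible triangle 0 → B₂ --𝟙--> B₂ → 0, provided the ambient category is idempotent complete. -/
/-!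
Complete `f₂` to a distinguished triangle `A₀ → A₁' → A₂ → ΣA₀`. Its direct sum with the
contractible triangle `0 → B₂ → B₂ → 0` is a binary biproduct, hence a product, in the category
of triangles, so it is distinguished like any product of distinguished triangles. Once `g₂ = 0`
it shares its third morphism `(f₂, 0)` with the given triangle, and two distinguished triangles
with the same third morphism are isomorphic.
-/

open CategoryTheory Limits Pretriangulated ZeroObject

universe v u

namespace CategoryTheory.Pretriangulated

-- Qualified, since `Triangle.shiftFunctor` would be found first inside `Triangle`.
variable {C : Type u} [Category.{v} C] [Preadditive C] [HasZeroObject C] [HasShift C ℤ]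
  [∀ n : ℤ, (CategoryTheory.shiftFunctor C n).Additive] [Pretriangulated C]

lemma distinguished_of_isLimit_binaryFan {T₁ T₂ : Triangle C} (hT₁ : T₁ ∈ distTriang C)
    (hT₂ : T₂ ∈ distTriang C) {c : BinaryFan T₁ T₂} (hc : IsLimit c) : c.pt ∈ distTriang C :=
  isomorphic_distinguished _
    (productTriangle_distinguished (pairFunction T₁ T₂) (by rintro (_ | _) <;> assumption)) _
    (hc.conePointUniqueUpToIso (productTriangle.isLimitFan _))

-- Both are reducible so that `simp` can compute their projections.
noncomputable abbrev Triangle.sumContractible (T : Triangle C) (B : C) : Triangle C :=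
  ⟨T.obj₁, T.obj₂ ⊞ B, T.obj₃ ⊞ B, biprod.lift T.mor₁ 0, biprod.map T.mor₂ (𝟙 B),
    biprod.desc T.mor₃ 0⟩

noncomputable abbrev Triangle.sumContractibleBicone (T : Triangle C) (B : C) :
    BinaryBicone T ⟨0, B, B, 0, 𝟙 B, 0⟩ where
  pt := T.sumContractible B
  fst := Triangle.homMk _ _ (𝟙 _) biprod.fst biprod.fst
  snd := Triangle.homMk _ _ 0 biprod.snd biprod.snd
  inl := Triangle.homMk _ _ (𝟙 _) biprod.inl biprod.inl
  inr := Triangle.homMk _ _ 0 biprod.inr biprod.inr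

lemma Triangle.sumContractible_distinguished {T : Triangle C} (hT : T ∈ distTriang C) (B : C) :
    T.sumContractible B ∈ distTriang C :=
  distinguished_of_isLimit_binaryFan hT (contractible_distinguished₁ B)
    (isBinaryBilimitOfTotal (T.sumContractibleBicone B) (by cat_disch)).isLimit

lemma nonempty_iso_of_distinguished_of_same_mor₃ {X Y Y' Z : C} {f : X ⟶ Y} {g : Y ⟶ Z}
    {f' : X ⟶ Y'} {g' : Y' ⟶ Z} {h : Z ⟶ X⟦(1 : ℤ)⟧} (hT : Triangle.mk f g h ∈ distTriang C)
    (hT' : Triangle.mk f' g' h ∈ distTriang C) :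
    Nonempty (Triangle.mk f g h ≅ Triangle.mk f' g' h) :=
  ⟨isoTriangleOfIso₁₃ _ _ hT hT' (Iso.refl _) (Iso.refl _) (by simp [Triangle.mk])⟩

end CategoryTheory.Pretriangulated

theorem triangle_splits_off_trivial_summand
    {C : Type u} [Category.{v} C] [Preadditive C] [HasZeroObject C] [HasShift C ℤ]
    [∀ n : ℤ, (shiftFunctor C n).Additive] [Pretriangulated C] [IsTriangulated C]
    [HasBinaryBiproducts C] [IsIdempotentComplete C]
    {A₀ A₁ A₂ B₂ : C} (f₀ : A₀ ⟶ A₁) (f₁ : A₁ ⟶ A₂) (g₁ : A₁ ⟶ B₂)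
    (f₂ : A₂ ⟶ A₀⟦(1 : ℤ)⟧) (g₂ : B₂ ⟶ A₀⟦(1 : ℤ)⟧)
    (hT : Triangle.mk f₀ (biprod.lift f₁ g₁) (biprod.desc f₂ g₂) ∈ distTriang C)
    (hg₂ : g₂ = 0) :
    ∃ (A₁' : C) (f₀' : A₀ ⟶ A₁') (k : A₁' ⟶ A₂),
      Triangle.mk f₀' k f₂ ∈ (distTriang C) ∧
      Nonempty ((Triangle.mk f₀ (biprod.lift f₁ g₁) (biprod.desc f₂ g₂)) ≅
        (Triangle.mk (biprod.lift f₀' (0 : A₀ ⟶ B₂)) (biprod.map k (𝟙 B₂))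
          (biprod.desc f₂ 0))) := by
  subst hg₂
  obtain ⟨A₁', f₀', k, hD⟩ := distinguished_cocone_triangle₂ f₂
  exact ⟨A₁', f₀', k, hD,
    nonempty_iso_of_distinguished_of_same_mor₃ hT (Triangle.sumContractible_distinguished hD B₂)⟩
end

section
/- Let C be a triangulated category and A an extension-closed full additive subcategory closed under direct summands. Then the idempotent completion of A, viewed inside the idempotent completion of C (which is triangulated), is again extension-closed: for any morphism f : X₂ → Σ̃X₀ in Karoubi C with X₀, X₂ ∈ Karoubi A, there is a distinguished triangle X₀ → X₁ → X₂ --f--> Σ̃X₀ in Karoubi C with X₁ ∈ Karoubi A. -/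
open CategoryTheory Limits Pretriangulated CategoryTheory.Idempotents

universe v u

attribute [local instance] CategoryTheory.Limits.hasBinaryBiproducts_of_finite_biproducts

variable (C : Type u) [Category.{v} C] [Preadditive C] [HasShift C ℤ]

/-- The shift functor induced on the idempotent completion `Karoubi C`. -/
@[simps]
noncomputable def KS : Karoubi C ⥤ Karoubi C where
  obj P := ⟨P.X⟦(1 : ℤ)⟧, P.p⟦(1 : ℤ)⟧', by rw [← Functor.map_comp, P.idem]⟩
  map φ := ⟨φ.f⟦(1 : ℤ)⟧', by
    dsimp only; rw [← Functor.map_comp, ← Functor.map_comp, Karoubi.comp_p, Karoubi.p_comp]⟩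
  map_id P := by ext; simp
  map_comp φ ψ := by ext; simp

/-- A candidate triangle in `Karoubi C` with respect to the induced shift. -/
structure KTriangle where
  X₀ : Karoubi C
  X₁ : Karoubi C
  X₂ : Karoubi C
  f₀ : X₀ ⟶ X₁
  f₁ : X₁ ⟶ X₂
  f₂ : X₂ ⟶ (KS C).obj X₀

variable [HasFiniteBiproducts C]

/-- Componentwise direct sum of candidate triangles in `Karoubi C`. -/
noncomputable def KTriangle.sum (T T' : KTriangle C) : KTriangle C where
  X₀ := T.X₀ ⊞ T'.X₀
  X₁ := T.X₁ ⊞ T'.X₁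
  X₂ := T.X₂ ⊞ T'.X₂
  f₀ := biprod.map T.f₀ T'.f₀
  f₁ := biprod.map T.f₁ T'.f₁
  f₂ := biprod.desc (T.f₂ ≫ (KS C).map biprod.inl) (T'.f₂ ≫ (KS C).map biprod.inr)

/-- Isomorphism of candidate triangles in `Karoubi C`. -/
structure KTriangleIso (T T' : KTriangle C) where
  e₀ : T.X₀ ≅ T'.X₀
  e₁ : T.X₁ ≅ T'.X₁
  e₂ : T.X₂ ≅ T'.X₂
  comm₀ : T.f₀ ≫ e₁.hom = e₀.hom ≫ T'.f₀
  comm₁ : T.f₁ ≫ e₂.hom = e₁.hom ≫ T'.f₁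
  comm₂ : T.f₂ ≫ (KS C).map e₀.hom = e₂.hom ≫ T'.f₂

variable [HasZeroObject C] [∀ n : ℤ, (shiftFunctor C n).Additive] [Pretriangulated C]

/-- The image in `Karoubi C` of a triangle of `C`. -/
noncomputable def ofTriangle (T : Triangle C) : KTriangle C where
  X₀ := (toKaroubi C).obj T.obj₁
  X₁ := (toKaroubi C).obj T.obj₂
  X₂ := (toKaroubi C).obj T.obj₃
  f₀ := (toKaroubi C).map T.mor₁
  f₁ := (toKaroubi C).map T.mor₂
  f₂ := ⟨T.mor₃, by simp <;> exact Category.comp_id _⟩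

/-- A candidate triangle in `Karoubi C` is distinguished (in the sense of
Balmer–Schlichting) if some direct sum with another candidate triangle is isomorphic
to the image of a distinguished triangle of `C`. -/
noncomputable def DistK (T : KTriangle C) : Prop :=
  ∃ (T' : KTriangle C) (T₀ : Triangle C),
    T₀ ∈ (distTriang C) ∧ Nonempty (KTriangleIso C (T.sum C T') (ofTriangle C T₀))

/-! The idempotents of `X₀` and `X₂` commute with `φ`, so they extend to an endomorphism `x` of
a distinguished triangle `X₀.X ⟶ B ⟶ X₂.X ⟶ X₀.X⟦1⟧` of `C` with connecting morphism `φ` and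
`B ∈ S`. Now `x - x²` vanishes on the outer terms of this triangle, hence squares to zero, so
`1 - (1 - x²)²` is an idempotent endomorphism of the triangle restricting to the given idempotents
on the outer terms. Its middle component cuts `X₁` out of `B`, and the triangle
`X₀ ⟶ X₁ ⟶ X₂ ⟶ X₀⟦1⟧` is a direct summand of the image of the triangle of `C`, the other summand
being the triangle on the complementary idempotents, with zero connecting morphism. -/

theorem IsIdempotentElem.one_sub_one_sub_pow_pow {R : Type*} [Ring R] {p : R}
    (hp : IsIdempotentElem p) {n : ℕ} (hn : n ≠ 0) : 1 - (1 - p ^ n) ^ n = p := by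
  obtain ⟨k, rfl⟩ := Nat.exists_eq_succ_of_ne_zero hn
  rw [hp.pow_succ_eq, hp.one_sub.pow_succ_eq, sub_sub_cancel]

namespace CategoryTheory

def Functor.mapEndRingHom {D E : Type*} [Category D] [Category E] [Preadditive D] [Preadditive E]
    (F : D ⥤ E) [F.Additive] (X : D) : End X →+* End (F.obj X) :=
  { F.mapEnd X, F.mapAddHom with }

namespace Pretriangulated

variable {D : Type*} [Category D] [Preadditive D] [HasZeroObject D] [HasShift D ℤ]
  [∀ n : ℤ, (shiftFunctor D n).Additive] [Pretriangulated D]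

instance : (Triangle.π₁ : Triangle D ⥤ D).Additive where

instance : (Triangle.π₃ : Triangle D ⥤ D).Additive where

theorem comp_eq_zero_of_hom₃_eq_zero_of_hom₁_eq_zero {T T' T'' : Triangle D}
    (hT' : T' ∈ distTriang D) {d : T ⟶ T'} {d' : T' ⟶ T''} (h₃ : d.hom₃ = 0)
    (h₁ : d'.hom₁ = 0) : d ≫ d' = 0 := by
  obtain ⟨u, hu⟩ := Triangle.coyoneda_exact₂ T' hT' d.hom₂ (by rw [← d.comm₂, h₃, comp_zero])
  ext
  · simp [h₁]
  · simp [hu, h₁]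
  · simp [h₃]

theorem exists_isIdempotentElem_hom₁_eq_hom₃_eq {T : Triangle D} (hT : T ∈ distTriang D)
    {p₁ : End T.obj₁} {p₃ : End T.obj₃} (hp₁ : IsIdempotentElem p₁) (hp₃ : IsIdempotentElem p₃)
    (comm : T.mor₃ ≫ p₁⟦(1 : ℤ)⟧' = p₃ ≫ T.mor₃) :
    ∃ q : End T, IsIdempotentElem q ∧ q.hom₁ = p₁ ∧ q.hom₃ = p₃ := by
  obtain ⟨b, hb₁, hb₂⟩ := complete_distinguished_triangle_morphism₂ T T hT hT p₁ p₃ comm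
  let x : End T := Triangle.homMk _ _ p₁ b p₃ hb₁ hb₂ comm
  have hx₁ : (Triangle.π₁.mapEndRingHom T) x = p₁ := rfl
  have hx₃ : (Triangle.π₃.mapEndRingHom T) x = p₃ := rfl
  have hx : (x - x ^ 2) ^ 2 = 0 := by
    refine (sq _).trans (comp_eq_zero_of_hom₃_eq_zero_of_hom₁_eq_zero hT ?_ ?_)
    · change (Triangle.π₃.mapEndRingHom T) (x - x ^ 2) = 0
      rw [map_sub, map_pow, hx₃]
      exact sub_eq_zero.2 (hp₃.pow_succ_eq 1).symm
    · change (Triangle.π₁.mapEndRingHom T) (x - x ^ 2) = 0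
      rw [map_sub, map_pow, hx₁]
      exact sub_eq_zero.2 (hp₁.pow_succ_eq 1).symm
  refine ⟨1 - (1 - x ^ 2) ^ 2, isIdempotentElem_one_sub_one_sub_pow_pow x 2 hx, ?_, ?_⟩
  · change (Triangle.π₁.mapEndRingHom T) (1 - (1 - x ^ 2) ^ 2) = p₁
    rw [map_sub, map_one, map_pow, map_sub, map_one, map_pow, hx₁]
    exact hp₁.one_sub_one_sub_pow_pow two_ne_zero
  · change (Triangle.π₃.mapEndRingHom T) (1 - (1 - x ^ 2) ^ 2) = p₃
    rw [map_sub, map_one, map_pow, map_sub, map_one, map_pow, hx₃]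
    exact hp₃.one_sub_one_sub_pow_pow two_ne_zero

end Pretriangulated

namespace Idempotents.Karoubi

variable {D : Type*} [Category D] {P Q : Karoubi D}

@[simps]
def homOfComm (P Q : Karoubi D) (f : P.X ⟶ Q.X) (hf : f ≫ Q.p = P.p ≫ f) : P ⟶ Q :=
  ⟨P.p ≫ f, by simp only [Category.assoc, hf, reassoc_of% P.idem]⟩

theorem homOfComm_comp_decompId_i {f : P.X ⟶ Q.X} (hf : f ≫ Q.p = P.p ≫ f) :
    homOfComm P Q f hf ≫ Q.decompId_i = P.decompId_i ≫ (toKaroubi D).map f := by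
  ext
  simp [hf, reassoc_of% P.idem]

variable [Preadditive D]

theorem complement_comm {f : P.X ⟶ Q.X} (hf : f ≫ Q.p = P.p ≫ f) :
    f ≫ Q.complement.p = P.complement.p ≫ f := by
  show f ≫ (𝟙 Q.X - Q.p) = (𝟙 P.X - P.p) ≫ f
  rw [Preadditive.comp_sub, Preadditive.sub_comp, hf, Category.comp_id, Category.id_comp]

theorem inl_decomposition_hom (P : Karoubi D) : biprod.inl ≫ P.decomposition.hom = P.decompId_i :=
  biprod.inl_desc _ _

theorem inr_decomposition_hom (P : Karoubi D) :
    biprod.inr ≫ P.decomposition.hom = P.complement.decompId_i :=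
  biprod.inr_desc _ _

theorem biprod_map_homOfComm_comp_decomposition_hom {f : P.X ⟶ Q.X}
    (hf : f ≫ Q.p = P.p ≫ f) :
    biprod.map (homOfComm P Q f hf) (homOfComm P.complement Q.complement f (complement_comm hf)) ≫
      Q.decomposition.hom = P.decomposition.hom ≫ (toKaroubi D).map f := by
  apply biprod.hom_ext'
  · rw [biprod.inl_map_assoc, inl_decomposition_hom, reassoc_of% inl_decomposition_hom]
    exact homOfComm_comp_decompId_i hf
  · rw [biprod.inr_map_assoc, inr_decomposition_hom, reassoc_of% inr_decomposition_hom]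
    exact homOfComm_comp_decompId_i (complement_comm hf)

end Idempotents.Karoubi

end CategoryTheory

variable {C} in
theorem exists_distK_of_comm {X₀ X₁ X₂ : Karoubi C} (f : X₀.X ⟶ X₁.X) (g : X₁.X ⟶ X₂.X)
    (δ : X₂ ⟶ (KS C).obj X₀) (hT : Triangle.mk f g δ.f ∈ distTriang C)
    (hf : f ≫ X₁.p = X₀.p ≫ f) (hg : g ≫ X₂.p = X₁.p ≫ g) :
    ∃ g₀ g₁, DistK C ⟨X₀, X₁, X₂, g₀, g₁, δ⟩ := by
  refine ⟨Karoubi.homOfComm X₀ X₁ f hf, Karoubi.homOfComm X₁ X₂ g hg,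
    ⟨X₀.complement, X₁.complement, X₂.complement,
      Karoubi.homOfComm _ _ f (Karoubi.complement_comm hf),
      Karoubi.homOfComm _ _ g (Karoubi.complement_comm hg), 0⟩,
    Triangle.mk f g δ.f, hT,
    ⟨{ e₀ := X₀.decomposition
       e₁ := X₁.decomposition
       e₂ := X₂.decomposition
       comm₀ := Karoubi.biprod_map_homOfComm_comp_decomposition_hom hf
       comm₁ := Karoubi.biprod_map_homOfComm_comp_decomposition_hom hg
       comm₂ := ?_ }⟩⟩
  dsimp only [KTriangle.sum]
  apply biprod.hom_ext'
  · rw [biprod.inl_desc_assoc, Category.assoc, ← Functor.map_comp]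
    -- `erw`: the type of `δ.f` in `Triangle.mk f g δ.f` only matches after unfolding `KS`
    erw [Karoubi.inl_decomposition_hom, reassoc_of% Karoubi.inl_decomposition_hom]
    ext
    exact (Karoubi.comp_p δ).trans (Karoubi.p_comp δ).symm
  · rw [biprod.inr_desc_assoc, zero_comp, zero_comp]
    erw [reassoc_of% Karoubi.inr_decomposition_hom]
    ext
    show 0 = (𝟙 X₂.X - X₂.p) ≫ δ.f
    rw [Preadditive.sub_comp, Category.id_comp, Karoubi.p_comp, sub_self]

theorem karoubi_of_extension_closed_is_extension_closed
    (S : Set C)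
    (hext : ∀ ⦃A₀ C₀ : C⦄, A₀ ∈ S → C₀ ∈ S → ∀ δ : C₀ ⟶ A₀⟦(1 : ℤ)⟧,
      ∃ (B : C) (_ : B ∈ S) (f : A₀ ⟶ B) (g : B ⟶ C₀),
        Triangle.mk f g δ ∈ distTriang C)
    (X₀ X₂ : Karoubi C) (hX₀ : X₀.X ∈ S) (hX₂ : X₂.X ∈ S)
    (φ : X₂ ⟶ (KS C).obj X₀) :
    ∃ (X₁ : Karoubi C) (_ : X₁.X ∈ S) (g₀ : X₀ ⟶ X₁) (g₁ : X₁ ⟶ X₂),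
      DistK C ⟨X₀, X₁, X₂, g₀, g₁, φ⟩ := by
  obtain ⟨B, hB, f, g, hT⟩ := hext hX₀ hX₂ φ.f
  obtain ⟨q, hq, hq₁, hq₃⟩ := Pretriangulated.exists_isIdempotentElem_hom₁_eq_hom₃_eq hT X₀.idem
    X₂.idem ((Karoubi.comp_p φ).trans (Karoubi.p_comp φ).symm)
  refine ⟨⟨B, q.hom₂, congrArg TriangleMorphism.hom₂ hq⟩, hB, exists_distK_of_comm f g φ hT (hq₁ ▸ q.comm₁) (hq₃ ▸ q.comm₂)⟩
end
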